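/- arXiv:2005.03102 — 2 statements merged into one kernel-verified Lean document; each statement's English description precedes it below -/
import Mathlib

section
/- Let k ≥ 2 and let F_2 = {0^k, 1^{k+1}} over the binary alphabet. Let A_0(n;F_2) (respectively A_1(n;F_2)) be the set of binary words of length n that avoid F_2 and start with 0 (respectively with 1). Then for all n ≥ k+1, |A_1(n;F_2)| = Σ_{i=1}^{k} |A_0(n−i;F_2)|. -/
/-!
Cut a word `s` that starts with `1` after its maximal initial run of ones: `s = 1^i t` with
`i ≥ 1`, where `t` is empty or starts with `0`. Avoiding `1^{k+1}` forces `i ≤ k`, hence, as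
`n > k`, `t ≠ []`.
Conversely, for `i ≤ k` a block `1^i` placed in front of a word starting with `0` creates no new
occurrence of `0^k` or of `1^{k+1}`. So `s ↦ (i, t)` is a bijection between `A_1(n; F_2)` and the
disjoint union of the `A_0(n - i; F_2)`, `1 ≤ i ≤ k`.
-/

/-- `s` avoids every pattern in `F`. -/
def Avoids {A : Type*} (s : List A) (F : Set (List A)) : Prop :=
  ∀ t ∈ F, ¬ t <:+: s

/-- `F_2 = {0^k, 1^{k+1}}`. -/
def F2 (k : ℕ) : Set (List (ZMod 2)) :=
  {List.replicate k (0 : ZMod 2), List.replicate (k + 1) (1 : ZMod 2)}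

open List

namespace List

variable {α : Type*} {a b : α} {t t' : List α} {i j m : ℕ}

theorem exists_eq_replicate_append_head?_ne (b : α) (s : List α) :
    ∃ i t, s = replicate i b ++ t ∧ t.head? ≠ some b := by
  induction s with
  | nil => exact ⟨0, [], rfl, by simp⟩
  | cons x s ih =>
    by_cases hx : x = b
    · obtain ⟨i, t, rfl, ht⟩ := ih
      exact ⟨i + 1, t, by simp [hx, replicate_succ], ht⟩
    · exact ⟨0, x :: s, rfl, by simpa using hx⟩

theorem eq_of_replicate_append_eq_replicate_append (ht : t.head? ≠ some b)
    (ht' : t'.head? ≠ some b) (h : replicate i b ++ t = replicate j b ++ t') : i = j := by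
  induction i generalizing j with
  | zero =>
    cases j with
    | zero => rfl
    | succ j =>
      rw [replicate_zero, nil_append] at h
      simp [h, replicate_succ] at ht
  | succ i ih =>
    cases j with
    | zero =>
      rw [replicate_zero, nil_append] at h
      simp [← h, replicate_succ] at ht'
    | succ j => simpa using ih (by simpa [replicate_succ] using h)

theorem le_of_replicate_prefix_replicate_append (ht : t.head? ≠ some b)
    (h : replicate m b <+: replicate j b ++ t) : m ≤ j := by
  by_contra! hjm
  obtain ⟨c, rfl⟩ := Nat.exists_eq_add_of_lt hjm
  rw [show j + c + 1 = j + (c + 1) by omega, replicate_add, prefix_append_right_inj,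
    replicate_succ] at h
  obtain ⟨u, rfl⟩ := h
  simp at ht

theorem replicate_prefix_replicate_append (h : m ≤ i) : replicate m b <+: replicate i b ++ t := by
  obtain ⟨c, rfl⟩ := Nat.exists_eq_add_of_le h
  rw [replicate_add, append_assoc]
  exact prefix_append _ _

theorem IsInfix.of_replicate_append_of_ne (hab : a ≠ b)
    (h : replicate m a <:+: replicate i b ++ t) : replicate m a <:+: t := by
  induction i with
  | zero => simpa using h
  | succ i ih =>
    rw [replicate_succ, cons_append, infix_cons_iff] at h
    rcases h with h | h
    · cases m with
      | zero => exact nil_infix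
      | succ m =>
        rw [replicate_succ, cons_prefix_cons] at h
        exact absurd h.1 hab
    · exact ih h

theorem IsInfix.of_replicate_append_of_lt (ht : t.head? ≠ some b) (him : i < m)
    (h : replicate m b <:+: replicate i b ++ t) : replicate m b <:+: t := by
  induction i with
  | zero => simpa using h
  | succ i ih =>
    rw [replicate_succ, cons_append, infix_cons_iff, ← cons_append, ← replicate_succ] at h
    rcases h with h | h
    · exact absurd (le_of_replicate_prefix_replicate_append ht h) him.not_ge
    · exact ih (by omega) h

end List

theorem zmod_two_eq_zero_of_ne_one {x : ZMod 2} (hx : x ≠ 1) : x = 0 := by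
  revert x
  decide

theorem Avoids.of_infix {A : Type*} {s u : List A} {F : Set (List A)} (hs : Avoids s F)
    (h : u <:+: s) : Avoids u F :=
  fun p hp hpu => hs p hp (hpu.trans h)

theorem avoids_F2_iff {k : ℕ} {s : List (ZMod 2)} :
    Avoids s (F2 k) ↔ ¬ replicate k 0 <:+: s ∧ ¬ replicate (k + 1) 1 <:+: s := by
  simp [Avoids, F2]

theorem avoids_F2_replicate_one_append_iff {k i : ℕ} {t : List (ZMod 2)} (hik : i ≤ k)
    (ht : t.head? = some 0) :
    Avoids (replicate i 1 ++ t) (F2 k) ↔ Avoids t (F2 k) := by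
  refine ⟨fun h => h.of_infix (suffix_append _ _).isInfix, fun h => ?_⟩
  rw [avoids_F2_iff] at h ⊢
  exact ⟨fun h0 => h.1 (h0.of_replicate_append_of_ne zero_ne_one),
    fun h1 => h.2 (h1.of_replicate_append_of_lt (by simp [ht]) (by omega))⟩

/-- `A_a(n; F_2)`. -/
def avoidingWords (k n : ℕ) (a : ZMod 2) : Set (List (ZMod 2)) :=
  {s | s.length = n ∧ Avoids s (F2 k) ∧ s.head? = some a}

theorem avoidingWords_one_eq_biUnion {k n : ℕ} (hn : k + 1 ≤ n) :
    avoidingWords k n 1 =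
      ⋃ i ∈ (Finset.Icc 1 k : Set ℕ), (replicate i 1 ++ ·) '' avoidingWords k (n - i) 0 := by
  ext s
  simp only [avoidingWords, Set.mem_ofPred_eq, Set.mem_iUnion, Set.mem_image, Finset.coe_Icc,
    Set.mem_Icc, exists_prop]
  constructor
  · rintro ⟨hlen, hav, hhead⟩
    obtain ⟨i, t, rfl, ht⟩ := exists_eq_replicate_append_head?_ne (1 : ZMod 2) s
    have hik : i ≤ k := by
      by_contra! hki
      exact (avoids_F2_iff.1 hav).2 (replicate_prefix_replicate_append hki).isInfix
    have ht0 : t.head? = some 0 := by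
      cases t with
      | nil =>
        simp only [append_nil, length_replicate] at hlen
        omega
      | cons x t => simpa using zmod_two_eq_zero_of_ne_one (by simpa using ht)
    have hi : 1 ≤ i := Nat.pos_of_ne_zero (by rintro rfl; simp [ht0] at hhead)
    refine ⟨i, ⟨hi, hik⟩, t, ⟨?_, (avoids_F2_replicate_one_append_iff hik ht0).1 hav, ht0⟩, rfl⟩
    simp only [length_append, length_replicate] at hlen
    omega
  · rintro ⟨i, ⟨hi1, hik⟩, t, ⟨hlen, hav, ht⟩, rfl⟩
    obtain ⟨i, rfl⟩ := Nat.exists_eq_add_of_lt hi1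
    refine ⟨?_, (avoids_F2_replicate_one_append_iff hik ht).2 hav, ?_⟩
    · simp only [length_append, length_replicate, hlen]
      omega
    · simp [replicate_succ]

theorem pairwiseDisjoint_image_replicate_one_append (k n : ℕ) :
    (Finset.Icc 1 k : Set ℕ).PairwiseDisjoint
      fun i => (replicate i 1 ++ ·) '' avoidingWords k (n - i) 0 := by
  intro i _ j _ hij
  refine Set.disjoint_left.2 ?_
  rintro _ ⟨t, ⟨-, -, ht⟩, rfl⟩ ⟨t', ⟨-, -, ht'⟩, h⟩
  exact hij (eq_of_replicate_append_eq_replicate_append (by simp [ht]) (by simp [ht']) h.symm)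

theorem stmt11_general (k n : ℕ) (hn : k + 1 ≤ n) :
    {s : List (ZMod 2) | s.length = n ∧ Avoids s (F2 k) ∧ s.head? = some 1}.ncard
      = ∑ i ∈ Finset.Icc 1 k,
          {s : List (ZMod 2) | s.length = n - i ∧ Avoids s (F2 k) ∧ s.head? = some 0}.ncard := by
  change (avoidingWords k n 1).ncard = ∑ i ∈ Finset.Icc 1 k, (avoidingWords k (n - i) 0).ncard
  have hfin (m : ℕ) : (avoidingWords k m 0).Finite :=
    (finite_length_eq (ZMod 2) m).subset fun _ hs => hs.1
  rw [avoidingWords_one_eq_biUnion hn, (Finset.Icc 1 k).finite_toSet.ncard_biUnion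
    (fun i _ => (hfin (n - i)).image _) (pairwiseDisjoint_image_replicate_one_append k n),
    finsum_mem_coe_finset]
  exact Finset.sum_congr rfl fun i _ => Set.ncard_image_of_injective _ (append_right_injective _)

theorem stmt11 (k n : ℕ) (hk : 2 ≤ k) (hn : k + 1 ≤ n) :
    {s : List (ZMod 2) | s.length = n ∧ Avoids s (F2 k) ∧ s.head? = some 1}.ncard
      = ∑ i ∈ Finset.Icc 1 k,
          {s : List (ZMod 2) | s.length = n - i ∧ Avoids s (F2 k) ∧ s.head? = some 0}.ncard :=
  stmt11_general k n hn
end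

section
/- Let Σ_1, Σ_2 be finite alphabets, let b ≥ 2, t_1 ≥ 1, and t = t_1·(b−1). Let s ∈ Σ_1^ℓ be a (b,1)-constrained de Bruijn sequence and let C ⊆ Σ_2^ℓ be a code in which any two distinct codewords have Hamming distance at least t+1 (a t-erasure-correcting code). For c ∈ C define f(c) ∈ (Σ_2 × Σ_1)^ℓ by f(c)_i = (c_i, s_i). Suppose c, c' ∈ C and Δ, Δ' ⊆ {1,…,ℓ} are each a union of at most t_1 sets of consecutive integers, each of size at most b−1 (so |Δ|, |Δ'| ≤ t with at most b−1 consecutive deleted positions). If the word obtained from f(c) by deleting the coordinates in Δ equals the word obtained from f(c') by deleting the coordinates in Δ', then c = c' (and Δ = Δ'). In other words, the code { f(c) : c ∈ C } corrects any t_1 bursts of deletions, each of length at most b−1. -/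
/-- The window `s[i, i+k-1]` (0-based start `i`, length `k`). -/
def window {A : Type*} (s : List A) (i k : ℕ) : List A := (s.drop i).take k

/-- `s` is a `(b,k)`-constrained de Bruijn sequence: any two windows of length `k`
starting at distinct positions at distance at most `b-1` are distinct. -/
def IsCDB {A : Type*} (s : List A) (b k : ℕ) : Prop :=
  ∀ i j : ℕ, i < j → j - i ≤ b - 1 → j + k ≤ s.length → window s i k ≠ window s j k

/-- The word obtained from `s` by deleting the symbols at the (0-based) positions
in `Δ`, keeping the remaining symbols in order. -/
def erasePos {A : Type*} (s : List A) (Δ : Finset ℕ) : List A :=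
  ((List.range s.length).filter (fun i => i ∉ Δ)).filterMap (fun i => s[i]?)

/-- Hamming distance between two words of the same length. -/
def hdist {B : Type*} [DecidableEq B] (x y : List B) : ℕ :=
  (List.zipWith (fun a b => if a = b then 0 else 1) x y).sum

/-- `Δ` is a union of at most `t₁` bursts (sets of consecutive integers), each of
size at most `w`, inside positions `{0,…,ℓ-1}`, with at most `w` consecutive
deleted positions overall (bursts are separated). -/
def IsBurstSet (Δ : Finset ℕ) (t₁ w ℓ : ℕ) : Prop :=
  (∃ l : List (ℕ × ℕ), l.length ≤ t₁ ∧ (∀ p ∈ l, p.2 ≤ w) ∧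
      Δ = l.foldr (fun p acc => Finset.Ico p.1 (p.1 + p.2) ∪ acc) ∅)
    ∧ Δ ⊆ Finset.range ℓ
    ∧ ¬ ∃ j : ℕ, ∀ u : ℕ, u ≤ w → j + u ∈ Δ

/-!
Reading off the second coordinate, deleting `Δ` and `Δ'` leaves the same subsequence of `s`.
At the least position `i` on which `Δ` and `Δ'` differ, say `i ∈ Δ \ Δ'`, both deletions have
kept equally many symbols before `i`, so the next symbol of the common word is `s i` on one side
and `s j` on the other, where `j` is the first position after `i` that survives `Δ`. As `Δ` has
no run of `b` consecutive positions, `0 < j - i ≤ b - 1`, and the de Bruijn property gives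
`s i ≠ s j`. Hence `Δ = Δ'`; then `c` and `c'` agree outside `Δ`, a set of at most `t₁ (b - 1)`
positions, so their Hamming distance forces `c = c'`.
-/

theorem getElem?_filterMap_of_isSome {α β : Type*} {f : α → Option β} {l : List α}
    (h : ∀ x ∈ l, (f x).isSome) (m : ℕ) : (l.filterMap f)[m]? = l[m]?.bind f := by
  induction l generalizing m with
  | nil => simp
  | cons a l ih =>
    obtain ⟨y, hy⟩ := Option.isSome_iff_exists.mp (h a List.mem_cons_self)
    cases m <;> simp [hy, ih fun x hx => h x (List.mem_cons_of_mem a hx)]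

def keptBelow (Δ : Finset ℕ) (j : ℕ) : ℕ := ((List.range j).filter (· ∉ Δ)).length

section keptBelow

variable {Δ : Finset ℕ}

theorem keptBelow_mono {i j : ℕ} (h : i ≤ j) : keptBelow Δ i ≤ keptBelow Δ j :=
  ((List.range_sublist.mpr h).filter _).length_le

theorem keptBelow_congr {Δ' : Finset ℕ} {j : ℕ} (h : ∀ x < j, x ∈ Δ ↔ x ∈ Δ') :
    keptBelow Δ j = keptBelow Δ' j := by
  unfold keptBelow
  congr 1
  exact List.filter_congr fun x hx => by simp [h x (List.mem_range.mp hx)]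

theorem keptBelow_add_of_forall_mem {i n : ℕ} (h : ∀ u < n, i + u ∈ Δ) :
    keptBelow Δ (i + n) = keptBelow Δ i := by
  simpa [keptBelow, List.range_add, List.filter_map, List.filter_eq_nil_iff] using h

theorem getElem?_filter_range_keptBelow {j n : ℕ} (hj : j ∉ Δ) (hjn : j < n) :
    ((List.range n).filter (· ∉ Δ))[keptBelow Δ j]? = some j := by
  obtain ⟨r, rfl⟩ := Nat.exists_eq_add_of_le hjn
  rw [List.range_add, List.range_succ, List.filter_append, List.filter_append, List.append_assoc,
    keptBelow, List.getElem?_append_right le_rfl]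
  simp [hj]

theorem getElem?_erasePos_keptBelow {α : Type*} (s : List α) {j : ℕ} (hj : j ∉ Δ) :
    (erasePos s Δ)[keptBelow Δ j]? = s[j]? := by
  rw [erasePos, getElem?_filterMap_of_isSome fun x hx => by simp_all]
  rcases lt_or_ge j s.length with hjs | hjs
  · rw [getElem?_filter_range_keptBelow hj hjs, Option.bind_some]
  · rw [List.getElem?_eq_none hjs, List.getElem?_eq_none (keptBelow_mono hjs), Option.bind_none]

end keptBelow

theorem getElem?_eq_of_erasePos_eq {α : Type*} {x y : List α} {Δ : Finset ℕ}
    (h : erasePos x Δ = erasePos y Δ) {i : ℕ} (hi : i ∉ Δ) : x[i]? = y[i]? := by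
  rw [← getElem?_erasePos_keptBelow x hi, h, getElem?_erasePos_keptBelow y hi]

theorem erasePos_map {α β : Type*} (f : α → β) (w : List α) (Δ : Finset ℕ) :
    erasePos (w.map f) Δ = (erasePos w Δ).map f := by
  simp [erasePos, List.map_filterMap]

theorem window_one {α : Type*} (s : List α) (i : ℕ) : window s i 1 = s[i]?.toList := by
  rw [window, List.take_one, List.head?_drop]

section IsCDB

variable {α : Type*} {s : List α} {b : ℕ}

theorem IsCDB.getElem?_ne (hs : IsCDB s b 1) {i j : ℕ} (hij : i < j) (hji : j - i ≤ b - 1)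
    (hj : j < s.length) : s[i]? ≠ s[j]? :=
  fun hij_eq => hs i j hij hji hj (by rw [window_one, window_one, hij_eq])

theorem IsCDB.mem_of_erasePos_eq (hs : IsCDB s b 1) {Δ Δ' : Finset ℕ}
    (hrun : ¬ ∃ j : ℕ, ∀ u : ℕ, u ≤ b - 1 → j + u ∈ Δ) {i : ℕ} (hi : i < s.length) (hiΔ : i ∈ Δ)
    (hbelow : ∀ x < i, x ∈ Δ ↔ x ∈ Δ') (h : erasePos s Δ = erasePos s Δ') : i ∈ Δ' := by
  classical
  by_contra hiΔ'
  push Not at hrun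
  obtain ⟨u₀, hu₀, hu₀Δ⟩ := hrun i
  have hex : ∃ u, i + u ∉ Δ := ⟨u₀, hu₀Δ⟩
  set u := Nat.find hex
  have hu_pos : 0 < u := Nat.pos_of_ne_zero fun hu => (Nat.find_eq_zero hex).mp hu hiΔ
  have hu_le : u ≤ b - 1 := (Nat.find_min' hex hu₀Δ).trans hu₀
  have hgap : ∀ v < u, i + v ∈ Δ := fun v hv => not_not.mp (Nat.find_min hex hv)
  have hsame : s[i]? = s[i + u]? := by
    rw [← getElem?_erasePos_keptBelow s hiΔ', ← keptBelow_congr hbelow, ← h,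
      ← keptBelow_add_of_forall_mem hgap, getElem?_erasePos_keptBelow s (Nat.find_spec hex)]
  have hlt : i + u < s.length := by
    by_contra hge
    rw [List.getElem?_eq_none (not_lt.mp hge), List.getElem?_eq_none_iff] at hsame
    omega
  exact hs.getElem?_ne (by omega) (by omega) hlt hsame

theorem IsCDB.eq_of_erasePos_eq (hs : IsCDB s b 1) {Δ Δ' : Finset ℕ}
    (hΔ : Δ ⊆ Finset.range s.length) (hΔ' : Δ' ⊆ Finset.range s.length)
    (hrun : ¬ ∃ j : ℕ, ∀ u : ℕ, u ≤ b - 1 → j + u ∈ Δ)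
    (hrun' : ¬ ∃ j : ℕ, ∀ u : ℕ, u ≤ b - 1 → j + u ∈ Δ')
    (h : erasePos s Δ = erasePos s Δ') : Δ = Δ' := by
  ext i
  induction i using Nat.strong_induction_on with
  | _ i ih =>
    exact ⟨fun hi => hs.mem_of_erasePos_eq hrun (Finset.mem_range.mp (hΔ hi)) hi ih h,
      fun hi => hs.mem_of_erasePos_eq hrun' (Finset.mem_range.mp (hΔ' hi)) hi
        (fun x hx => (ih x hx).symm) h.symm⟩

end IsCDB

theorem hdist_eq_card {β : Type*} [DecidableEq β] {x y : List β} (h : x.length = y.length) :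
    hdist x y = ((Finset.range x.length).filter fun i => x[i]? ≠ y[i]?).card := by
  rw [Finset.card_filter]
  induction x generalizing y with
  | nil => simp [hdist]
  | cons a x ih =>
    obtain _ | ⟨a', y⟩ := y
    · simp at h
    · have hd : hdist (a :: x) (a' :: y) = (if a = a' then 0 else 1) + hdist x y := by
        simp [hdist]
      rw [hd, ih (by simpa using h), List.length_cons, Finset.sum_range_succ', add_comm]
      simp [ite_not]

theorem hdist_le_card {β : Type*} [DecidableEq β] {x y : List β} (h : x.length = y.length)
    {Δ : Finset ℕ} (hΔ : ∀ i ∉ Δ, x[i]? = y[i]?) : hdist x y ≤ Δ.card := by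
  rw [hdist_eq_card h]
  refine Finset.card_le_card fun i hi => ?_
  by_contra hiΔ
  exact (Finset.mem_filter.mp hi).2 (hΔ i hiΔ)

theorem card_foldr_union_Ico_le {w : ℕ} (l : List (ℕ × ℕ)) (hw : ∀ p ∈ l, p.2 ≤ w) :
    (l.foldr (fun p acc => Finset.Ico p.1 (p.1 + p.2) ∪ acc) ∅).card ≤ l.length * w := by
  induction l with
  | nil => simp
  | cons p l ih =>
    rw [List.foldr_cons, List.length_cons, add_mul, one_mul, add_comm _ w]
    refine (Finset.card_union_le _ _).trans (add_le_add ?_ ?_)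
    · simpa using hw p List.mem_cons_self
    · exact ih fun q hq => hw q (List.mem_cons_of_mem p hq)

theorem IsBurstSet.card_le {Δ : Finset ℕ} {t₁ w ℓ : ℕ} (h : IsBurstSet Δ t₁ w ℓ) :
    Δ.card ≤ t₁ * w := by
  obtain ⟨⟨l, hlen, hw, rfl⟩, -, -⟩ := h
  exact (card_foldr_union_Ico_le l hw).trans (Nat.mul_le_mul_right w hlen)

theorem stmt15_general {A B : Type*} [DecidableEq B] (b t₁ ℓ : ℕ)
    (s : List A) (hslen : s.length = ℓ) (hs : IsCDB s b 1)
    (C : Set (List B)) (hClen : ∀ c ∈ C, c.length = ℓ)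
    (hCdist : ∀ c ∈ C, ∀ c' ∈ C, c ≠ c' → t₁ * (b - 1) + 1 ≤ hdist c c')
    (c c' : List B) (hc : c ∈ C) (hc' : c' ∈ C)
    (Δ Δ' : Finset ℕ)
    (hΔ : IsBurstSet Δ t₁ (b - 1) ℓ) (hΔ' : IsBurstSet Δ' t₁ (b - 1) ℓ)
    (heq : erasePos (c.zip s) Δ = erasePos (c'.zip s) Δ') :
    c = c' ∧ Δ = Δ' := by
  have hcs : c.length = s.length := (hClen c hc).trans hslen.symm
  have hc's : c'.length = s.length := (hClen c' hc').trans hslen.symm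
  have hsnd : erasePos s Δ = erasePos s Δ' := by
    simpa [← erasePos_map, List.map_snd_zip, hcs.ge, hc's.ge] using
      congrArg (List.map Prod.snd) heq
  obtain rfl : Δ = Δ' := by
    subst hslen
    exact hs.eq_of_erasePos_eq hΔ.2.1 hΔ'.2.1 hΔ.2.2 hΔ'.2.2 hsnd
  have hfst : erasePos c Δ = erasePos c' Δ := by
    simpa [← erasePos_map, List.map_fst_zip, hcs.le, hc's.le] using
      congrArg (List.map Prod.fst) heq
  refine ⟨by_contra fun hne => ?_, rfl⟩
  have hfar := hCdist c hc c' hc' hne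
  have hnear := hdist_le_card (hcs.trans hc's.symm) fun i hi => getElem?_eq_of_erasePos_eq hfst hi
  have hsmall := hΔ.card_le
  omega

theorem stmt15 {A B : Type*} [DecidableEq B] (b t₁ ℓ : ℕ) (hb : 2 ≤ b) (ht₁ : 1 ≤ t₁)
    (s : List A) (hslen : s.length = ℓ) (hs : IsCDB s b 1)
    (C : Set (List B)) (hClen : ∀ c ∈ C, c.length = ℓ)
    (hCdist : ∀ c ∈ C, ∀ c' ∈ C, c ≠ c' → t₁ * (b - 1) + 1 ≤ hdist c c')
    (c c' : List B) (hc : c ∈ C) (hc' : c' ∈ C)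
    (Δ Δ' : Finset ℕ)
    (hΔ : IsBurstSet Δ t₁ (b - 1) ℓ) (hΔ' : IsBurstSet Δ' t₁ (b - 1) ℓ)
    (heq : erasePos (c.zip s) Δ = erasePos (c'.zip s) Δ') :
    c = c' ∧ Δ = Δ' :=
  stmt15_general b t₁ ℓ s hslen hs C hClen hCdist c c' hc hc' Δ Δ' hΔ hΔ' heq
end
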